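/- arXiv:1706.05583 — 2 statements merged into one kernel-verified Lean document; each statement's English description precedes it below -/
import Mathlib

section
/- Let U and B be finite index sets (users and SBSs). For each u ∈ U let Q_u^UL, Q_u^DL, H_u^UL, H_u^DL, Z_u^UL : ℕ → ℝ≥0 and for each b ∈ B let Z_b^DL : ℕ → ℝ≥0 be nonnegative sequences updated by Q_u^x(t+1) = [Q_u^x(t) − r_u^x(t)]⁺ + A_u^x(t), H_u^x(t+1) = [H_u^x(t) − r_u^x(t)]⁺ + γ_u^x(t), Z_u^UL(t+1) = [Z_u^UL(t) − δ_u^UL(t)]⁺ + p_u^UL(t), Z_b^DL(t+1) = [Z_b^DL(t) − δ_b^DL(t)]⁺ + p_b^DL(t), for x ∈ {UL, DL}, where all the quantities r_u^x(t), A_u^x(t), γ_u^x(t), δ_u^UL(t), p_u^UL(t), δ_b^DL(t), p_b^DL(t) are nonnegative. Assume the bounds 0 ≤ A_u^x(t) ≤ A_max^x, 0 ≤ r_u^x(t) ≤ r_max^x, 0 ≤ γ_u^x(t) ≤ r_max^x, 0 ≤ p_u^UL(t), δ_u^UL(t) ≤ P_max^UL, and 0 ≤ p_b^DL(t), δ_b^DL(t)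 ≤ P_max^DL. Let L(t) = ½·(Σ_{u∈U}[Q_u^UL(t)² + Q_u^DL(t)² + H_u^UL(t)² + H_u^DL(t)² + Z_u^UL(t)²] + Σ_{b∈B} Z_b^DL(t)²), let v ≥ 0, and let f_UL, f_DL : ℝ → ℝ be arbitrary functions. Then for every t: L(t+1) − L(t) − v·Σ_{u∈U}(f_UL(γ_u^UL(t)) + f_DL(γ_u^DL(t))) ≤ C + Σ_{u∈U}[Q_u^UL(t)·A_u^UL(t) + Q_u^DL(t)·A_u^DL(t)] − Σ_{u∈U}[v·f_UL(γ_u^UL(t)) − H_u^UL(t)·γ_u^UL(t) + v·f_DL(γ_u^DL(t)) − H_u^DL(t)·γ_u^DL(t)] − Σ_{u∈U}[(Q_u^UL(t) + H_u^UL(t))·r_u^UL(t) + (Q_u^DL(t) + H_u^DL(t))·r_u^DL(t) + Z_u^UL(t)·(δ_u^UL(t) − p_u^UL(t))] − Σ_{b∈B} Z_b^DL(t)·(δ_b^DL(t) − p_b^DL(t)), where C = ½·Σ_{u∈U}[(A_max^UL)² + (A_max^DL)² + 2(P_max^UL)² + 3(r_max^UL)² + 3(r_max^DL)²] + Σ_{b∈B}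 2(P_max^DL)². -/
open Finset

lemma drift_key (Q r A mr mA : ℝ) (hQ : 0 ≤ Q) (hr : 0 ≤ r) (hA : 0 ≤ A)
    (hrm : r ≤ mr) (hAm : A ≤ mA) :
    (max (Q - r) 0 + A) ^ 2 ≤ Q ^ 2 + mr ^ 2 + mA ^ 2 + 2 * Q * (A - r) := by
  have h1 : max (Q - r) 0 ≤ Q := max_le (by linarith) hQ
  have h2 : (max (Q - r) 0) ^ 2 ≤ (Q - r) ^ 2 := by
    rcases le_or_gt (Q - r) 0 with h | h
    · rw [max_eq_right h]; simpa using sq_nonneg (Q - r)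
    · rw [max_eq_left h.le]
  have h0 : (0:ℝ) ≤ max (Q - r) 0 := le_max_right _ _
  have hr2 : r ^ 2 ≤ mr ^ 2 := by nlinarith
  have hA2 : A ^ 2 ≤ mA ^ 2 := by nlinarith
  nlinarith [mul_nonneg h0 hA, mul_le_mul_of_nonneg_right h1 hA]


theorem drift_plus_penalty_bound
    {U B : Type*} [Fintype U] [Fintype B]
    (QUL QDL HUL HDL ZUL : U → ℕ → ℝ) (ZDL : B → ℕ → ℝ)
    (rUL rDL AUL ADL γUL γDL pUL δUL : U → ℕ → ℝ) (pDL δDL : B → ℕ → ℝ)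
    (AmaxUL AmaxDL rmaxUL rmaxDL PmaxUL PmaxDL : ℝ)
    (v : ℝ) (hv : 0 ≤ v) (fUL fDL : ℝ → ℝ)
    -- nonnegativity of the queues
    (hQUL : ∀ u t, 0 ≤ QUL u t) (hQDL : ∀ u t, 0 ≤ QDL u t)
    (hHUL : ∀ u t, 0 ≤ HUL u t) (hHDL : ∀ u t, 0 ≤ HDL u t)
    (hZUL : ∀ u t, 0 ≤ ZUL u t) (hZDL : ∀ b t, 0 ≤ ZDL b t)
    -- queue update rules
    (hQULupd : ∀ u t, QUL u (t + 1) = max (QUL u t - rUL u t) 0 + AUL u t)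
    (hQDLupd : ∀ u t, QDL u (t + 1) = max (QDL u t - rDL u t) 0 + ADL u t)
    (hHULupd : ∀ u t, HUL u (t + 1) = max (HUL u t - rUL u t) 0 + γUL u t)
    (hHDLupd : ∀ u t, HDL u (t + 1) = max (HDL u t - rDL u t) 0 + γDL u t)
    (hZULupd : ∀ u t, ZUL u (t + 1) = max (ZUL u t - δUL u t) 0 + pUL u t)
    (hZDLupd : ∀ b t, ZDL b (t + 1) = max (ZDL b t - δDL b t) 0 + pDL b t)
    -- bounds on arrivals, rates, auxiliary variables and powers
    (hAUL : ∀ u t, 0 ≤ AUL u t ∧ AUL u t ≤ AmaxUL)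
    (hADL : ∀ u t, 0 ≤ ADL u t ∧ ADL u t ≤ AmaxDL)
    (hrUL : ∀ u t, 0 ≤ rUL u t ∧ rUL u t ≤ rmaxUL)
    (hrDL : ∀ u t, 0 ≤ rDL u t ∧ rDL u t ≤ rmaxDL)
    (hγUL : ∀ u t, 0 ≤ γUL u t ∧ γUL u t ≤ rmaxUL)
    (hγDL : ∀ u t, 0 ≤ γDL u t ∧ γDL u t ≤ rmaxDL)
    (hpUL : ∀ u t, 0 ≤ pUL u t ∧ pUL u t ≤ PmaxUL)
    (hδUL : ∀ u t, 0 ≤ δUL u t ∧ δUL u t ≤ PmaxUL)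
    (hpDL : ∀ b t, 0 ≤ pDL b t ∧ pDL b t ≤ PmaxDL)
    (hδDL : ∀ b t, 0 ≤ δDL b t ∧ δDL b t ≤ PmaxDL)
    -- Lyapunov function and the constant C
    (L : ℕ → ℝ)
    (hL : ∀ t, L t = (1 / 2) *
      (∑ u : U, (QUL u t ^ 2 + QDL u t ^ 2 + HUL u t ^ 2 + HDL u t ^ 2 + ZUL u t ^ 2)
        + ∑ b : B, ZDL b t ^ 2))
    (C : ℝ)
    (hC : C = (1 / 2) * ∑ _u : U,
        (AmaxUL ^ 2 + AmaxDL ^ 2 + 2 * PmaxUL ^ 2 + 3 * rmaxUL ^ 2 + 3 * rmaxDL ^ 2)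
      + ∑ _b : B, 2 * PmaxDL ^ 2) :
    ∀ t, L (t + 1) - L t - v * ∑ u : U, (fUL (γUL u t) + fDL (γDL u t)) ≤
      C
      + ∑ u : U, (QUL u t * AUL u t + QDL u t * ADL u t)
      - ∑ u : U, (v * fUL (γUL u t) - HUL u t * γUL u t
          + v * fDL (γDL u t) - HDL u t * γDL u t)
      - ∑ u : U, ((QUL u t + HUL u t) * rUL u t + (QDL u t + HDL u t) * rDL u t
          + ZUL u t * (δUL u t - pUL u t))
      - ∑ b : B, ZDL b t * (δDL b t - pDL b t) := by
  intro t
  set cU : ℝ := AmaxUL ^ 2 + AmaxDL ^ 2 + 2 * PmaxUL ^ 2 + 3 * rmaxUL ^ 2 + 3 * rmaxDL ^ 2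
    with hcU
  have hU : ∀ u : U,
      QUL u (t+1) ^ 2 + QDL u (t+1) ^ 2 + HUL u (t+1) ^ 2 + HDL u (t+1) ^ 2 + ZUL u (t+1) ^ 2
      ≤ (QUL u t ^ 2 + QDL u t ^ 2 + HUL u t ^ 2 + HDL u t ^ 2 + ZUL u t ^ 2) + cU
        + 2 * (QUL u t * (AUL u t - rUL u t) + QDL u t * (ADL u t - rDL u t)
          + HUL u t * (γUL u t - rUL u t) + HDL u t * (γDL u t - rDL u t)
          + ZUL u t * (pUL u t - δUL u t)) := by
    intro u
    have k1 := drift_key (QUL u t) (rUL u t) (AUL u t) rmaxUL AmaxUL (hQUL u t)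
      (hrUL u t).1 (hAUL u t).1 (hrUL u t).2 (hAUL u t).2
    have k2 := drift_key (QDL u t) (rDL u t) (ADL u t) rmaxDL AmaxDL (hQDL u t)
      (hrDL u t).1 (hADL u t).1 (hrDL u t).2 (hADL u t).2
    have k3 := drift_key (HUL u t) (rUL u t) (γUL u t) rmaxUL rmaxUL (hHUL u t)
      (hrUL u t).1 (hγUL u t).1 (hrUL u t).2 (hγUL u t).2
    have k4 := drift_key (HDL u t) (rDL u t) (γDL u t) rmaxDL rmaxDL (hHDL u t)
      (hrDL u t).1 (hγDL u t).1 (hrDL u t).2 (hγDL u t).2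
    have k5 := drift_key (ZUL u t) (δUL u t) (pUL u t) PmaxUL PmaxUL (hZUL u t)
      (hδUL u t).1 (hpUL u t).1 (hδUL u t).2 (hpUL u t).2
    rw [hQULupd, hQDLupd, hHULupd, hHDLupd, hZULupd]
    simp only [hcU]
    linarith
  have hB : ∀ b : B, ZDL b (t+1) ^ 2 ≤ ZDL b t ^ 2 + 4 * PmaxDL ^ 2
      + 2 * (ZDL b t * (pDL b t - δDL b t)) := by
    intro b
    have k := drift_key (ZDL b t) (δDL b t) (pDL b t) PmaxDL PmaxDL (hZDL b t)
      (hδDL b t).1 (hpDL b t).1 (hδDL b t).2 (hpDL b t).2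
    rw [hZDLupd]
    nlinarith [sq_nonneg PmaxDL]
  have sU := Finset.sum_le_sum (fun u (_ : u ∈ Finset.univ) => hU u)
  have sB := Finset.sum_le_sum (fun b (_ : b ∈ Finset.univ) => hB b)
  have eU : ∑ u : U, ((QUL u t ^ 2 + QDL u t ^ 2 + HUL u t ^ 2 + HDL u t ^ 2 + ZUL u t ^ 2) + cU
        + 2 * (QUL u t * (AUL u t - rUL u t) + QDL u t * (ADL u t - rDL u t)
          + HUL u t * (γUL u t - rUL u t) + HDL u t * (γDL u t - rDL u t)
          + ZUL u t * (pUL u t - δUL u t)))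
      = ∑ u : U, (QUL u t ^ 2 + QDL u t ^ 2 + HUL u t ^ 2 + HDL u t ^ 2 + ZUL u t ^ 2)
        + ∑ _u : U, cU
        + 2 * ∑ u : U, (QUL u t * (AUL u t - rUL u t) + QDL u t * (ADL u t - rDL u t)
          + HUL u t * (γUL u t - rUL u t) + HDL u t * (γDL u t - rDL u t)
          + ZUL u t * (pUL u t - δUL u t)) := by
    rw [Finset.sum_add_distrib, Finset.sum_add_distrib, Finset.mul_sum]
  have eB : ∑ b : B, (ZDL b t ^ 2 + 4 * PmaxDL ^ 2 + 2 * (ZDL b t * (pDL b t - δDL b t)))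
      = ∑ b : B, ZDL b t ^ 2 + 2 * ∑ _b : B, 2 * PmaxDL ^ 2
        + 2 * ∑ b : B, ZDL b t * (pDL b t - δDL b t) := by
    rw [Finset.sum_add_distrib, Finset.sum_add_distrib, Finset.mul_sum, Finset.mul_sum]
    congr 2
    exact Finset.sum_congr rfl fun _ _ => by ring
  have hsum : ∑ u : U, (QUL u t * AUL u t + QDL u t * ADL u t)
      - ∑ u : U, (v * fUL (γUL u t) - HUL u t * γUL u t + v * fDL (γDL u t) - HDL u t * γDL u t)
      - ∑ u : U, ((QUL u t + HUL u t) * rUL u t + (QDL u t + HDL u t) * rDL u t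
          + ZUL u t * (δUL u t - pUL u t))
      + v * ∑ u : U, (fUL (γUL u t) + fDL (γDL u t))
    = ∑ u : U, (QUL u t * (AUL u t - rUL u t) + QDL u t * (ADL u t - rDL u t)
          + HUL u t * (γUL u t - rUL u t) + HDL u t * (γDL u t - rDL u t)
          + ZUL u t * (pUL u t - δUL u t)) := by
    rw [Finset.mul_sum, ← Finset.sum_sub_distrib, ← Finset.sum_sub_distrib,
      ← Finset.sum_add_distrib]
    exact Finset.sum_congr rfl fun u _ => by ring
  have hz : ∑ b : B, ZDL b t * (pDL b t - δDL b t)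
      = - ∑ b : B, ZDL b t * (δDL b t - pDL b t) := by
    rw [← Finset.sum_neg_distrib]
    exact Finset.sum_congr rfl fun b _ => by ring
  rw [hL, hL, hC]
  rw [eU] at sU
  rw [eB] at sB
  simp only [hcU] at sU ⊢
  linarith
end

section
/- Let U (users) and B (SBSs) be finite sets. For each u ∈ U let ≻_u be a strict preference ordering over B ∪ {∅}, and for each b ∈ B let ⪰_b be a transitive preference relation (with strict part ≻_b) over finite subsets of U. Assume the SBS preferences satisfy the consistency property: for any subsets T, T' ⊆ U and user u ∉ T', if T ≻_b T ∪ {u} and T' ⪰_b T, then T' ⪰_b T' ∪ {u}. Let Υ be a many-to-one matching (each user matched to at most one SBS, Υ_b ⊆ U the set of users matched to b, and u ∈ Υ_b ⇔ Υ(u) = b). Suppose that for every pair (u, b) with u ∉ Υ_b and b ≻_u Υ(u), there exists a subset T ⊆ U with u ∉ T such that T ≻_b T ∪ {u} and Υ_b ⪰_b T (i.e., u was rejected by b while b held T, and b's final match is weakly preferred to T). Then Υ is pairwise stable: there is no pair (u, b) with u ∉ Υ_b, b ≻_u Υ(u), and Υ_b ∪ {u} ≻_b Υ_b. -/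
theorem deferred_acceptance_pairwise_stable
    {U B : Type*} [Fintype U] [Fintype B] [DecidableEq U]
    -- user u's strict preference over SBSs (including being unmatched, ∅ = none)
    (prefU : U → Option B → Option B → Prop)
    -- SBS b's weak preference ⪰_b over finite subsets of users
    (prefB : B → Finset U → Finset U → Prop)
    -- strict part ≻_b of ⪰_b
    (sprefB : B → Finset U → Finset U → Prop)
    (hspref : ∀ b T T', sprefB b T T' ↔ prefB b T T' ∧ ¬ prefB b T' T)
    -- ⪰_b is transitive
    (htrans : ∀ b, Transitive (prefB b))
    -- consistency property of SBS preferences: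
    -- if T ≻_b T ∪ {u} and T' ⪰_b T with u ∉ T', then T' ⪰_b T' ∪ {u}
    (hconsistent : ∀ b (T T' : Finset U) (u : U), u ∉ T' →
      sprefB b T (insert u T) → prefB b T' T → prefB b T' (insert u T'))
    -- the matching: Υ(u) is the SBS of user u, M b = Υ_b the users matched to b
    (Υ : U → Option B) (M : B → Finset U)
    (hmatch : ∀ u b, u ∈ M b ↔ Υ u = some b)
    -- every pair (u,b) with u ∉ Υ_b and b ≻_u Υ(u) corresponds to a rejection:
    -- b rejected u while holding some T, and b's final match is weakly preferred to T
    (hreject : ∀ u b, u ∉ M b → prefU u (some b) (Υ u) →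
      ∃ T : Finset U, u ∉ T ∧ sprefB b T (insert u T) ∧ prefB b (M b) T) :
    -- conclusion: Υ is pairwise stable, i.e., no blocking pair exists
    ¬ ∃ (u : U) (b : B), u ∉ M b ∧ prefU u (some b) (Υ u) ∧
      sprefB b (insert u (M b)) (M b) := by
  rintro ⟨u, b, hu, hpref, hblock⟩
  obtain ⟨T, huT, hsT, hMT⟩ := hreject u b hu hpref
  have h : prefB b (M b) (insert u (M b)) := hconsistent b T (M b) u hu hsT hMT
  exact ((hspref b (insert u (M b)) (M b)).mp hblock).2 h
end
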